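/- Consider a periodic switched matrix-weighted network on n nodes: let A^0, …, A^{m−1} be the matrix-weighted adjacency data of m graphs on the same n nodes (each edge weight A^k_ij ∈ ℝ^{d×d} symmetric positive semidefinite, A^k_ij = A^k_ji, A^k_ii = 0), with corresponding matrix-valued Laplacians L^0, …, L^{m−1} and dwell times Δt_0, …, Δt_{m−1} > 0, extended periodically by L^k = L^{k mod m}, Δt_k = Δt_{k mod m}. If the integral graph over one period has a positive spanning tree — i.e., the simple graph on the n nodes whose edges are the pairs (i,j) with Σ_{k=0}^{m−1} Δt_k A^k_ij positive definite is connected — then for every initial state x_0 ∈ ℝ^{dn}, the sequence defined by x_{k+1} = exp(−Δt_k L^k) x_k converges to the average consensus value x_f = 1_n ⊗ ((1/n) Σ_{i=1}^n (x_0)_i). -/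

import Mathlib

open Matrix Finset Filter

/-!
Each step `exp (-Δtₖ Lᵏ)` is symmetric and fixes the consensus vectors, so it preserves their
orthogonal complement `W`, and `x_k` is the average plus an orbit in `W`. Since `Lᵏ` is positive
semidefinite, `s ↦ ‖exp (-s Lᵏ) y‖²` has derivative `-2 ⟨Lᵏ z, z⟩ ≤ 0`, so each step is
nonexpansive and strictly shrinks every vector it moves. A vector fixed by all steps of a period
lies in the kernel of every `Lᵏ`, hence of the Laplacian of the integral graph; as the positive
definite edges of that graph connect it, the vector is a consensus vector, and in `W` it is `0`.
So one period strictly shrinks every nonzero vector of `W`, uniformly by some `ρ < 1` by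
compactness of the unit sphere, and the orbit decays like `ρ ^ (k / m)`.
-/

/-- The matrix-valued Laplacian of a matrix-weighted graph on `n` nodes with
state dimension `d`: the `(i,j)` off-diagonal block is `-A i j` and the `i`-th
diagonal block is `∑ k ≠ i, A i k`. -/
noncomputable def mwLaplacian {n d : ℕ} (A : Fin n → Fin n → Matrix (Fin d) (Fin d) ℝ) :
    Matrix (Fin n × Fin d) (Fin n × Fin d) ℝ :=
  fun p q =>
    if p.1 = q.1 then ∑ k ∈ Finset.univ.erase p.1, A p.1 k p.2 q.2
    else -(A p.1 q.1 p.2 q.2)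

/-- Membership in the consensus subspace `R = range (1ₙ ⊗ I_d)`:
all blocks of `x` are equal. -/
def isConsensus {n d : ℕ} (x : Fin n × Fin d → ℝ) : Prop :=
  ∃ v : Fin d → ℝ, ∀ p : Fin n × Fin d, x p = v p.2

/-- The Euclidean norm on `ι → ℝ`. -/
noncomputable def euclNorm {ι : Type*} [Fintype ι] (x : ι → ℝ) : ℝ :=
  Real.sqrt (x ⬝ᵥ x)

/-- The state of the switched system at switching instants:
`x_0 = x0`, `x_{k+1} = E k ⬝ x_k`. -/
noncomputable def stateSeq {ι : Type*} [Fintype ι] [DecidableEq ι]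
    (E : ℕ → Matrix ι ι ℝ) (x0 : ι → ℝ) : ℕ → ι → ℝ
  | 0 => x0
  | k + 1 => (E k).mulVec (stateSeq E x0 k)

section EuclNorm

variable {ι : Type*} [Fintype ι]

theorem euclNorm_eq_norm_toLp (x : ι → ℝ) : euclNorm x = ‖WithLp.toLp 2 x‖ := by
  simp only [euclNorm, EuclideanSpace.norm_eq, dotProduct, Real.norm_eq_abs, sq, abs_mul_abs_self]

theorem euclNorm_le_of_dotProduct_le {x y : ι → ℝ} (h : x ⬝ᵥ x ≤ y ⬝ᵥ y) :
    euclNorm x ≤ euclNorm y :=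
  Real.sqrt_le_sqrt h

theorem euclNorm_lt_of_dotProduct_lt {x y : ι → ℝ} (h : x ⬝ᵥ x < y ⬝ᵥ y) :
    euclNorm x < euclNorm y :=
  Real.sqrt_lt_sqrt (Finset.sum_nonneg fun i _ => mul_self_nonneg (x i)) h

theorem tendsto_zero_of_euclNorm_le {α : Type*} {l : Filter α} {x : α → ι → ℝ} {b : α → ℝ}
    (hb : Tendsto b l (nhds 0)) (hx : ∀ a, euclNorm (x a) ≤ b a) :
    Tendsto x l (nhds 0) := by
  have h : Tendsto (fun a => WithLp.toLp 2 (x a)) l (nhds 0) :=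
    squeeze_zero_norm (fun a => (euclNorm_eq_norm_toLp (x a)).symm ▸ hx a) hb
  exact ((PiLp.continuous_ofLp 2 fun _ : ι => ℝ).tendsto 0).comp h

end EuclNorm

/-- Maximize `‖f w‖` over the compact unit sphere of `W`. -/
theorem exists_lt_one_forall_norm_map_le {V : Type*} [NormedAddCommGroup V] [NormedSpace ℝ V]
    [FiniteDimensional ℝ V] (W : Submodule ℝ V) (f : V →ₗ[ℝ] V)
    (hf : ∀ w ∈ W, w ≠ 0 → ‖f w‖ < ‖w‖) :
    ∃ ρ, 0 ≤ ρ ∧ ρ < 1 ∧ ∀ w ∈ W, ‖f w‖ ≤ ρ * ‖w‖ := by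
  set S := (W : Set V) ∩ Metric.sphere 0 1
  obtain ⟨ρ, hρ0, hρ1, hS⟩ : ∃ ρ, 0 ≤ ρ ∧ ρ < 1 ∧ ∀ u ∈ S, ‖f u‖ ≤ ρ := by
    rcases S.eq_empty_or_nonempty with hSe | hSne
    · exact ⟨0, le_rfl, zero_lt_one, by simp [hSe]⟩
    have hScpt : IsCompact S :=
      (isCompact_sphere 0 1).inter_left W.closed_of_finiteDimensional
    obtain ⟨z, ⟨hzW, hz1⟩, hzmax⟩ := hScpt.exists_isMaxOn hSne
      (continuous_norm.comp (LinearMap.continuous_of_finiteDimensional f)).continuousOn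
    rw [mem_sphere_zero_iff_norm] at hz1
    refine ⟨‖f z‖, norm_nonneg _, ?_, fun u hu => hzmax hu⟩
    simpa [hz1] using hf z hzW (by rintro rfl; simp at hz1)
  refine ⟨ρ, hρ0, hρ1, fun w hw => ?_⟩
  rcases eq_or_ne w 0 with rfl | hw0
  · simp
  have hw' : 0 < ‖w‖ := norm_pos_iff.mpr hw0
  have hu := hS (‖w‖⁻¹ • w) ⟨W.smul_mem _ hw, by simp [norm_smul, hw'.ne']⟩
  rw [map_smul, norm_smul, norm_inv, norm_norm, inv_mul_le_iff₀ hw'] at hu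
  linarith

theorem exists_lt_one_forall_euclNorm_map_le {ι : Type*} [Fintype ι] (W : Submodule ℝ (ι → ℝ))
    (f : (ι → ℝ) →ₗ[ℝ] ι → ℝ) (hf : ∀ w ∈ W, w ≠ 0 → euclNorm (f w) < euclNorm w) :
    ∃ ρ, 0 ≤ ρ ∧ ρ < 1 ∧ ∀ w ∈ W, euclNorm (f w) ≤ ρ * euclNorm w := by
  let e := WithLp.linearEquiv 2 ℝ (ι → ℝ)
  obtain ⟨ρ, hρ0, hρ1, hρ⟩ := exists_lt_one_forall_norm_map_le
    (W.comap e.toLinearMap) (e.symm.toLinearMap ∘ₗ f ∘ₗ e.toLinearMap)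
    fun w hw hw0 => by simpa [euclNorm_eq_norm_toLp, e] using hf _ hw (by simpa [e] using hw0)
  refine ⟨ρ, hρ0, hρ1, fun w hw => ?_⟩
  simpa [euclNorm_eq_norm_toLp, e] using hρ (e.symm w) (by simpa [e])

section StateSeq

variable {ι : Type*} [Fintype ι] [DecidableEq ι] (E : ℕ → Matrix ι ι ℝ)

theorem stateSeq_add (x y : ι → ℝ) :
    ∀ k, stateSeq E (x + y) k = stateSeq E x k + stateSeq E y k
  | 0 => rfl
  | k + 1 => by simp only [stateSeq, stateSeq_add x y k, mulVec_add]

theorem stateSeq_smul (c : ℝ) (x : ι → ℝ) : ∀ k, stateSeq E (c • x) k = c • stateSeq E x k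
  | 0 => rfl
  | k + 1 => by simp only [stateSeq, stateSeq_smul c x k, mulVec_smul]

noncomputable def stateSeqLinearMap (k : ℕ) : (ι → ℝ) →ₗ[ℝ] ι → ℝ where
  toFun x := stateSeq E x k
  map_add' x y := stateSeq_add E x y k
  map_smul' c x := stateSeq_smul E c x k

theorem stateSeq_add_index (x : ι → ℝ) (a : ℕ) :
    ∀ b, stateSeq E x (a + b) = stateSeq (fun k => E (a + k)) (stateSeq E x a) b
  | 0 => rfl
  | b + 1 => by rw [← Nat.add_assoc, stateSeq, stateSeq_add_index x a b, stateSeq]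

theorem stateSeq_add_period {m : ℕ} (hE : Function.Periodic E m) (x : ι → ℝ) (k : ℕ) :
    stateSeq E x (m + k) = stateSeq E (stateSeq E x m) k := by
  rw [stateSeq_add_index]
  congr
  funext j
  rw [Nat.add_comm, hE]

theorem stateSeq_eq_self {x : ι → ℝ} : ∀ {m}, (∀ k < m, E k *ᵥ x = x) → stateSeq E x m = x
  | 0, _ => rfl
  | m + 1, hx => by
    rw [stateSeq, stateSeq_eq_self fun k hk => hx k (Nat.lt_succ_of_lt hk), hx m m.lt_succ_self]

theorem stateSeq_mem {W : Submodule ℝ (ι → ℝ)} (hW : ∀ k, ∀ w ∈ W, E k *ᵥ w ∈ W) {x : ι → ℝ}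
    (hx : x ∈ W) : ∀ k, stateSeq E x k ∈ W
  | 0 => hx
  | k + 1 => hW k _ (stateSeq_mem hW hx k)

variable {E}

theorem euclNorm_stateSeq_le (hE : ∀ k y, euclNorm (E k *ᵥ y) ≤ euclNorm y) (x : ι → ℝ) :
    ∀ k, euclNorm (stateSeq E x k) ≤ euclNorm x
  | 0 => le_rfl
  | k + 1 => (hE k _).trans (euclNorm_stateSeq_le hE x k)

theorem euclNorm_stateSeq_lt_or_forall_mulVec_eq (hE : ∀ k y, euclNorm (E k *ᵥ y) ≤ euclNorm y)
    (hE' : ∀ k y, E k *ᵥ y ≠ y → euclNorm (E k *ᵥ y) < euclNorm y) (x : ι → ℝ) :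
    ∀ m, euclNorm (stateSeq E x m) < euclNorm x ∨ ∀ k < m, E k *ᵥ x = x
  | 0 => Or.inr fun _ hk => absurd hk (Nat.not_lt_zero _)
  | m + 1 => by
    rcases euclNorm_stateSeq_lt_or_forall_mulVec_eq hE hE' x m with hlt | hfix
    · exact Or.inl ((hE m _).trans_lt hlt)
    have hxm : stateSeq E x m = x := stateSeq_eq_self E hfix
    by_cases hxfix : E m *ᵥ x = x
    · exact Or.inr fun k hk => (Nat.lt_succ_iff_lt_or_eq.mp hk).elim (hfix k) (· ▸ hxfix)
    · left
      rw [stateSeq, hxm]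
      exact hE' m x hxfix

theorem tendsto_stateSeq_of_forall_mulVec_eq {c x : ι → ℝ} (hc : ∀ k, E k *ᵥ c = c)
    (h : Tendsto (stateSeq E (x - c)) atTop (nhds 0)) : Tendsto (stateSeq E x) atTop (nhds c) := by
  have hsplit k : stateSeq E x k = stateSeq E (x - c) k + c := by
    simpa only [sub_add_cancel, stateSeq_eq_self E fun j _ => hc j] using
      stateSeq_add E (x - c) c k
  simpa only [zero_add, ← hsplit] using h.add_const c

end StateSeq

theorem tendsto_stateSeq_zero_of_periodic {ι : Type*} [Fintype ι] [DecidableEq ι]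
    {E : ℕ → Matrix ι ι ℝ} {m : ℕ} (hper : Function.Periodic E m) {W : Submodule ℝ (ι → ℝ)}
    (hW : ∀ k, ∀ w ∈ W, E k *ᵥ w ∈ W) (hE : ∀ k y, euclNorm (E k *ᵥ y) ≤ euclNorm y)
    (hE' : ∀ k y, E k *ᵥ y ≠ y → euclNorm (E k *ᵥ y) < euclNorm y)
    (hfix : ∀ w ∈ W, (∀ k < m, E k *ᵥ w = w) → w = 0) {x : ι → ℝ} (hx : x ∈ W) :
    Tendsto (stateSeq E x) atTop (nhds 0) := by
  rcases Nat.eq_zero_or_pos m with rfl | hm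
  · rw [hfix x hx fun k hk => absurd hk (Nat.not_lt_zero k)]
    exact tendsto_const_nhds.congr fun k => (stateSeq_eq_self E fun _ _ => mulVec_zero _).symm
  have hperiod : ∀ w ∈ W, w ≠ 0 → euclNorm (stateSeq E w m) < euclNorm w := fun w hw hw0 =>
    (euclNorm_stateSeq_lt_or_forall_mulVec_eq hE hE' w m).resolve_right (hw0 ∘ hfix w hw)
  obtain ⟨ρ, hρ0, hρ1, hρ⟩ :=
    exists_lt_one_forall_euclNorm_map_le W (stateSeqLinearMap E m) hperiod
  have hdecay : ∀ q r, ∀ w ∈ W, euclNorm (stateSeq E w (m * q + r)) ≤ ρ ^ q * euclNorm w := by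
    intro q r
    induction q with
    | zero => simpa using fun w _ => euclNorm_stateSeq_le hE w r
    | succ q ih =>
      intro w hw
      rw [Nat.mul_succ, Nat.add_right_comm, Nat.add_comm, stateSeq_add_period E hper, pow_succ]
      calc _ ≤ ρ ^ q * euclNorm (stateSeq E w m) := ih _ (stateSeq_mem E hW hw m)
        _ ≤ ρ ^ q * (ρ * euclNorm w) := by gcongr; exact hρ w hw
        _ = _ := by ring
  refine tendsto_zero_of_euclNorm_le (b := fun k => ρ ^ (k / m) * euclNorm x) ?_ fun k => ?_
  · exact ((tendsto_pow_atTop_nhds_zero_of_lt_one hρ0 hρ1).comp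
      (Nat.tendsto_div_const_atTop hm.ne')).mul_const _ |>.trans (by simp)
  · simpa only [Nat.div_add_mod] using hdecay (k / m) (k % m) x hx

theorem HasDerivAt.dotProduct_self {ι : Type*} [Fintype ι] {f : ℝ → ι → ℝ} {f' : ι → ℝ} {t : ℝ}
    (hf : HasDerivAt f f' t) :
    HasDerivAt (fun s => f s ⬝ᵥ f s) (2 * (f' ⬝ᵥ f t)) t := by
  have hcoord := hasDerivAt_pi.mp hf
  have h : HasDerivAt (fun s => f s ⬝ᵥ f s) (∑ i, (f' i * f t i + f t i * f' i)) t :=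
    HasDerivAt.fun_sum fun i _ => (hcoord i).fun_mul (hcoord i)
  refine h.congr_deriv ?_
  rw [dotProduct, Finset.mul_sum]
  exact Finset.sum_congr rfl fun i _ => by ring

section HeatSemigroup

attribute [local instance] Matrix.linftyOpNormedRing Matrix.linftyOpNormedAlgebra

open NormedSpace

variable {ι : Type*} [Fintype ι] [DecidableEq ι]

theorem hasDerivAt_exp_smul_mulVec (M : Matrix ι ι ℝ) (y : ι → ℝ) (t : ℝ) :
    HasDerivAt (fun s : ℝ => exp (s • M) *ᵥ y) (M *ᵥ (exp (t • M) *ᵥ y)) t := by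
  rw [mulVec_mulVec]
  exact ((mulVecBilin ℝ ℝ).flip y).toContinuousLinearMap.hasFDerivAt.comp_hasDerivAt t
    (hasDerivAt_exp_smul_const' M t)

theorem exp_smul_mulVec_of_mulVec_eq_zero {M : Matrix ι ι ℝ} {y : ι → ℝ} (hy : M *ᵥ y = 0)
    (t : ℝ) : exp (t • M) *ᵥ y = y := by
  have hderiv (s : ℝ) : HasDerivAt (fun s : ℝ => exp (s • M) *ᵥ y) 0 s := by
    convert hasDerivAt_exp_smul_mulVec M y s
    rw [mulVec_mulVec, ((Commute.refl M).smul_right s).exp_right.eq, ← mulVec_mulVec, hy,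
      mulVec_zero]
  simpa using is_const_of_deriv_eq_zero (fun s => (hderiv s).differentiableAt)
    (fun s => (hderiv s).deriv) t 0

theorem hasDerivAt_dotProduct_exp_neg_smul_mulVec (L : Matrix ι ι ℝ) (y : ι → ℝ) (s : ℝ) :
    HasDerivAt (fun s : ℝ => (exp (s • -L) *ᵥ y) ⬝ᵥ (exp (s • -L) *ᵥ y))
      (-(2 * ((L *ᵥ (exp (s • -L) *ᵥ y)) ⬝ᵥ (exp (s • -L) *ᵥ y)))) s := by
  convert (hasDerivAt_exp_smul_mulVec (-L) y s).dotProduct_self using 1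
  rw [neg_mulVec, neg_dotProduct, mul_neg]

variable {L : Matrix ι ι ℝ}

theorem isSymm_exp_neg_smul (hL : L.IsSymm) (t : ℝ) : (exp (-(t • L))).IsSymm := by
  rw [IsSymm, ← exp_transpose, transpose_neg, transpose_smul, hL.eq]

theorem euclNorm_exp_neg_smul_mulVec_le (hL : L.PosSemidef) {t : ℝ} (ht : 0 ≤ t) (y : ι → ℝ) :
    euclNorm (exp (-(t • L)) *ᵥ y) ≤ euclNorm y := by
  have hanti := antitone_of_deriv_nonpos
    (fun s => (hasDerivAt_dotProduct_exp_neg_smul_mulVec L y s).differentiableAt) fun s => by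
      rw [(hasDerivAt_dotProduct_exp_neg_smul_mulVec L y s).deriv, neg_nonpos, dotProduct_comm]
      simpa using hL.dotProduct_mulVec_nonneg (exp (s • -L) *ᵥ y)
  simpa [← smul_neg] using euclNorm_le_of_dotProduct_le (hanti ht)

theorem euclNorm_exp_neg_smul_mulVec_lt (hL : L.PosSemidef) {t : ℝ} (ht : 0 < t) {y : ι → ℝ}
    (hy : L *ᵥ y ≠ 0) : euclNorm (exp (-(t • L)) *ᵥ y) < euclNorm y := by
  have hanti := strictAnti_of_deriv_neg fun s => by
    rw [(hasDerivAt_dotProduct_exp_neg_smul_mulVec L y s).deriv, neg_lt_zero, dotProduct_comm]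
    set z := exp (s • -L) *ᵥ y
    have hz : L *ᵥ z ≠ 0 := by
      rw [mulVec_mulVec, (((Commute.refl L).neg_right.smul_right s).exp_right).eq,
        ← mulVec_mulVec]
      exact fun h => hy <|
        mulVec_injective_of_isUnit (Matrix.isUnit_exp _) (h.trans (mulVec_zero _).symm)
    have hnonneg := hL.dotProduct_mulVec_nonneg z
    have hne := mt (hL.dotProduct_mulVec_zero_iff z).mp hz
    simp only [star_trivial] at hnonneg hne
    positivity
  simpa [← smul_neg] using euclNorm_lt_of_dotProduct_lt (hanti ht)

theorem exp_neg_smul_mulVec_eq_self_iff (hL : L.PosSemidef) {t : ℝ} (ht : 0 < t) (y : ι → ℝ) :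
    exp (-(t • L)) *ᵥ y = y ↔ L *ᵥ y = 0 := by
  refine ⟨fun h => by_contra fun hy => (euclNorm_exp_neg_smul_mulVec_lt hL ht hy).ne (by rw [h]),
    fun h => ?_⟩
  rw [← smul_neg]
  exact exp_smul_mulVec_of_mulVec_eq_zero (by rw [neg_mulVec, h, neg_zero]) t

end HeatSemigroup

section Laplacian

variable {n d : ℕ}

def block (x : Fin n × Fin d → ℝ) (i : Fin n) : Fin d → ℝ := fun b => x (i, b)

@[simp]
theorem block_apply (x : Fin n × Fin d → ℝ) (i : Fin n) (b : Fin d) : block x i b = x (i, b) :=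
  rfl

variable (A : Fin n → Fin n → Matrix (Fin d) (Fin d) ℝ)

theorem mwLaplacian_apply (p q : Fin n × Fin d) :
    mwLaplacian A p q = (if p.1 = q.1 then ∑ k, A p.1 k p.2 q.2 else 0) - A p.1 q.1 p.2 q.2 := by
  rw [mwLaplacian]
  split_ifs with h
  · rw [← h, Finset.sum_erase_eq_sub (Finset.mem_univ _)]
  · rw [zero_sub]

theorem mwLaplacian_mulVec_apply (x : Fin n × Fin d → ℝ) (i : Fin n) (a : Fin d) :
    (mwLaplacian A *ᵥ x) (i, a) = ∑ j, (A i j *ᵥ (block x i - block x j)) a := by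
  simp only [mulVec, dotProduct, Fintype.sum_prod_type, mwLaplacian_apply, sub_mul, ite_mul,
    zero_mul, Finset.sum_sub_distrib, Pi.sub_apply, block_apply, mul_sub, Finset.sum_mul]
  rw [Finset.sum_comm (f := fun j b => ite _ _ _)]
  simp [Finset.sum_comm (γ := Fin d)]

theorem mwLaplacian_mulVec_consensus (v : Fin d → ℝ) : mwLaplacian A *ᵥ (fun p => v p.2) = 0 := by
  ext ⟨i, a⟩
  simp only [mwLaplacian_mulVec_apply]
  exact Finset.sum_eq_zero fun j _ => by
    change (A i j *ᵥ (v - v)) a = 0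
    rw [sub_self, mulVec_zero, Pi.zero_apply]

theorem mwLaplacian_sum_smul {κ : Type*} (s : Finset κ) (c : κ → ℝ)
    (A : κ → Fin n → Fin n → Matrix (Fin d) (Fin d) ℝ) :
    mwLaplacian (fun i j => ∑ k ∈ s, c k • A k i j) = ∑ k ∈ s, c k • mwLaplacian (A k) := by
  ext p q
  simp only [mwLaplacian_apply, Matrix.sum_apply, Matrix.smul_apply, smul_eq_mul, mul_sub,
    Finset.sum_sub_distrib, mul_ite, mul_zero, Finset.mul_sum]
  split_ifs <;> simp [Finset.sum_comm (γ := Fin n)]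

variable {A}

theorem mwLaplacian_isSymm (hsym : ∀ i j, A i j = A j i) (hA : ∀ i j, (A i j).IsSymm) :
    (mwLaplacian A).IsSymm := by
  ext p q
  simp only [transpose_apply, mwLaplacian_apply, eq_comm (a := q.1)]
  split_ifs with h
  · simp only [h, (hA _ _).apply]
  · rw [hsym, (hA _ _).apply]

theorem two_mul_dotProduct_mwLaplacian_mulVec (hsym : ∀ i j, A i j = A j i)
    (x : Fin n × Fin d → ℝ) :
    2 * (x ⬝ᵥ (mwLaplacian A *ᵥ x))
      = ∑ i, ∑ j, (block x i - block x j) ⬝ᵥ (A i j *ᵥ (block x i - block x j)) := by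
  have hrows : x ⬝ᵥ (mwLaplacian A *ᵥ x)
      = ∑ i, ∑ j, block x i ⬝ᵥ (A i j *ᵥ (block x i - block x j)) := by
    simp only [dotProduct, Fintype.sum_prod_type, mwLaplacian_mulVec_apply, Finset.mul_sum,
      block_apply]
    exact Finset.sum_congr rfl fun i _ => Finset.sum_comm
  have hswap : x ⬝ᵥ (mwLaplacian A *ᵥ x)
      = -∑ i, ∑ j, block x j ⬝ᵥ (A i j *ᵥ (block x i - block x j)) := by
    rw [hrows, Finset.sum_comm, ← Finset.sum_neg_distrib]
    refine Finset.sum_congr rfl fun i _ => ?_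
    rw [← Finset.sum_neg_distrib]
    refine Finset.sum_congr rfl fun j _ => ?_
    rw [hsym, ← neg_sub, mulVec_neg, dotProduct_neg]
  calc 2 * (x ⬝ᵥ (mwLaplacian A *ᵥ x))
      = ∑ i, ∑ j, block x i ⬝ᵥ (A i j *ᵥ (block x i - block x j))
        - ∑ i, ∑ j, block x j ⬝ᵥ (A i j *ᵥ (block x i - block x j)) := by linarith
    _ = _ := by simp only [← Finset.sum_sub_distrib, ← sub_dotProduct]

theorem mwLaplacian_posSemidef (hpsd : ∀ i j, (A i j).PosSemidef) (hsym : ∀ i j, A i j = A j i) :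
    (mwLaplacian A).PosSemidef := by
  refine .of_dotProduct_mulVec_nonneg (isHermitian_iff_isSymm.mpr <|
    mwLaplacian_isSymm hsym fun i j => isHermitian_iff_isSymm.mp (hpsd i j).isHermitian) fun x => ?_
  have hq := two_mul_dotProduct_mwLaplacian_mulVec hsym x
  have hnonneg : 0 ≤ ∑ i, ∑ j, (block x i - block x j) ⬝ᵥ (A i j *ᵥ (block x i - block x j)) :=
    Finset.sum_nonneg fun i _ => Finset.sum_nonneg fun j _ => by
      simpa using (hpsd i j).dotProduct_mulVec_nonneg (block x i - block x j)
  simp only [star_trivial]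
  linarith

end Laplacian

section Consensus

variable {n d : ℕ}

/-- `⟨x, L x⟩ = 0` forces `x_i = x_j` along every positive definite edge. -/
theorem isConsensus_of_mwLaplacian_mulVec_eq_zero {A : Fin n → Fin n → Matrix (Fin d) (Fin d) ℝ}
    (hpsd : ∀ i j, (A i j).PosSemidef) (hsym : ∀ i j, A i j = A j i)
    (hconn : (SimpleGraph.fromRel fun i j => (A i j).PosDef).Preconnected)
    {x : Fin n × Fin d → ℝ} (hx : mwLaplacian A *ᵥ x = 0) : isConsensus x := by
  have hnonneg (i j) : 0 ≤ (block x i - block x j) ⬝ᵥ (A i j *ᵥ (block x i - block x j)) := by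
    simpa using (hpsd i j).dotProduct_mulVec_nonneg (block x i - block x j)
  have hzero (i j) : (block x i - block x j) ⬝ᵥ (A i j *ᵥ (block x i - block x j)) = 0 := by
    have hsum := two_mul_dotProduct_mwLaplacian_mulVec hsym x
    rw [hx, dotProduct_zero, mul_zero, eq_comm, Finset.sum_eq_zero_iff_of_nonneg fun i _ =>
      Finset.sum_nonneg fun j _ => hnonneg i j] at hsum
    exact (Finset.sum_eq_zero_iff_of_nonneg fun j _ => hnonneg i j).mp
      (hsum i (Finset.mem_univ i)) j (Finset.mem_univ j)
  have hedge (i j) (h : (A i j).PosDef) : block x i = block x j := by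
    by_contra hne
    simpa [hzero i j] using h.dotProduct_mulVec_pos (sub_ne_zero.mpr hne)
  have hreach (i j) : block x i = block x j := by
    obtain ⟨p⟩ := hconn i j
    induction p with
    | nil => rfl
    | cons hadj _ ih =>
      obtain ⟨-, h | h⟩ := (SimpleGraph.fromRel_adj _ _ _).mp hadj
      · exact (hedge _ _ h).trans ih
      · exact (hedge _ _ h).symm.trans ih
  rcases isEmpty_or_nonempty (Fin n) with hn | ⟨⟨i₀⟩⟩
  · exact ⟨0, fun p => isEmptyElim p.1⟩
  · exact ⟨block x i₀, fun p => congrFun (hreach p.1 i₀) p.2⟩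

/-- `∑ₖ Δtₖ Lᵏ` is the Laplacian of the integral graph `∑ₖ Δtₖ Aᵏ`. -/
theorem isConsensus_of_forall_mwLaplacian_mulVec_eq_zero {m : ℕ}
    {A : ℕ → Fin n → Fin n → Matrix (Fin d) (Fin d) ℝ} {Δt : ℕ → ℝ} (hΔ : ∀ k, 0 ≤ Δt k)
    (hpsd : ∀ k i j, (A k i j).PosSemidef) (hsym : ∀ k i j, A k i j = A k j i)
    (hconn : (SimpleGraph.fromRel fun i j : Fin n =>
      (∑ k ∈ Finset.range m, Δt k • A k i j).PosDef).Preconnected)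
    {x : Fin n × Fin d → ℝ} (hx : ∀ k < m, mwLaplacian (A k) *ᵥ x = 0) : isConsensus x := by
  refine isConsensus_of_mwLaplacian_mulVec_eq_zero
    (fun i j => posSemidef_sum _ fun k _ => (hpsd k i j).smul (hΔ k))
    (fun i j => Finset.sum_congr rfl fun k _ => by rw [hsym]) hconn ?_
  rw [mwLaplacian_sum_smul, sum_mulVec]
  exact Finset.sum_eq_zero fun k hk => by rw [smul_mulVec, hx k (Finset.mem_range.mp hk), smul_zero]

variable (n d) in
def consensusOrthogonal : Submodule ℝ (Fin n × Fin d → ℝ) where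
  carrier := {x | ∀ v : Fin d → ℝ, (fun p => v p.2) ⬝ᵥ x = 0}
  zero_mem' v := dotProduct_zero _
  add_mem' hx hy v := by rw [dotProduct_add, hx v, hy v, add_zero]
  smul_mem' c x hx v := by rw [dotProduct_smul, hx v, smul_zero]

theorem eq_zero_of_isConsensus_of_mem_consensusOrthogonal {x : Fin n × Fin d → ℝ}
    (hx : x ∈ consensusOrthogonal n d) (hc : isConsensus x) : x = 0 := by
  obtain ⟨v, hv⟩ := hc
  obtain rfl : x = fun p => v p.2 := funext hv
  exact dotProduct_self_eq_zero.mp (hx v)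

theorem mulVec_mem_consensusOrthogonal {M : Matrix (Fin n × Fin d) (Fin n × Fin d) ℝ}
    (hM : M.IsSymm) (hfix : ∀ v : Fin d → ℝ, M *ᵥ (fun p => v p.2) = fun p => v p.2)
    {x : Fin n × Fin d → ℝ} (hx : x ∈ consensusOrthogonal n d) :
    M *ᵥ x ∈ consensusOrthogonal n d := fun v => by
  rw [dotProduct_mulVec, ← mulVec_transpose, hM.eq, hfix, hx v]

theorem sub_average_mem_consensusOrthogonal (hn : n ≠ 0) (x : Fin n × Fin d → ℝ) :
    x - (fun p => (n : ℝ)⁻¹ * ∑ i, x (i, p.2)) ∈ consensusOrthogonal n d := fun v => by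
  simp only [dotProduct, Fintype.sum_prod_type_right, Pi.sub_apply, mul_sub,
    Finset.sum_sub_distrib, ← Finset.mul_sum, Finset.sum_const, Finset.card_univ,
    Fintype.card_fin, nsmul_eq_mul, inv_mul_cancel_left₀ (Nat.cast_ne_zero.mpr hn : (n : ℝ) ≠ 0),
    sub_self]

end Consensus

theorem periodic_positive_spanning_tree_average_consensus_general
    {n d m : ℕ}
    (A : ℕ → Fin n → Fin n → Matrix (Fin d) (Fin d) ℝ) (Δt : ℕ → ℝ)
    (hAper : ∀ k, A k = A (k % m)) (hΔper : ∀ k, Δt k = Δt (k % m))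
    (hΔ : ∀ k, 0 < Δt k)
    (hpsd : ∀ k i j, (A k i j).PosSemidef)
    (hsym : ∀ k i j, A k i j = A k j i)
    (htree : (SimpleGraph.fromRel (fun i j : Fin n =>
        (∑ k ∈ Finset.range m, Δt k • A k i j).PosDef)).Connected) :
    ∀ x0 : Fin n × Fin d → ℝ,
      Tendsto
        (stateSeq (fun k => NormedSpace.exp (-(Δt k • mwLaplacian (A k)))) x0)
        atTop (nhds (fun p => (n : ℝ)⁻¹ * ∑ i : Fin n, x0 (i, p.2))) := by
  intro x0
  set E := fun k => NormedSpace.exp (-(Δt k • mwLaplacian (A k)))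
  have hL k : (mwLaplacian (A k)).PosSemidef := mwLaplacian_posSemidef (hpsd k) (hsym k)
  have hEfix k y : E k *ᵥ y = y ↔ mwLaplacian (A k) *ᵥ y = 0 :=
    exp_neg_smul_mulVec_eq_self_iff (hL k) (hΔ k) y
  have hEc k (v : Fin d → ℝ) : E k *ᵥ (fun p => v p.2) = fun p => v p.2 :=
    (hEfix k _).mpr (mwLaplacian_mulVec_consensus _ v)
  have hW k : ∀ w ∈ consensusOrthogonal n d, E k *ᵥ w ∈ consensusOrthogonal n d := fun _ =>
    mulVec_mem_consensusOrthogonal (isSymm_exp_neg_smul (isHermitian_iff_isSymm.mp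
      (hL k).isHermitian) _) (hEc k)
  have hper : Function.Periodic E m := fun k => by
    simp only [E, hAper (k + m), hΔper (k + m), Nat.add_mod_right, ← hAper, ← hΔper]
  have hnofix : ∀ w ∈ consensusOrthogonal n d, (∀ k < m, E k *ᵥ w = w) → w = 0 :=
    fun w hw hfix => eq_zero_of_isConsensus_of_mem_consensusOrthogonal hw <|
      isConsensus_of_forall_mwLaplacian_mulVec_eq_zero (fun k => (hΔ k).le) hpsd hsym
        htree.preconnected fun k hk => (hEfix k w).mp (hfix k hk)
  refine tendsto_stateSeq_of_forall_mulVec_eq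
    (fun k => hEc k fun a => (n : ℝ)⁻¹ * ∑ i, x0 (i, a)) <|
    tendsto_stateSeq_zero_of_periodic hper hW
      (fun k => euclNorm_exp_neg_smul_mulVec_le (hL k) (hΔ k).le)
      (fun k y hy => euclNorm_exp_neg_smul_mulVec_lt (hL k) (hΔ k) (mt (hEfix k y).mpr hy)) hnofix
      (sub_average_mem_consensusOrthogonal (Fin.pos_iff_nonempty.mpr htree.nonempty).ne' x0)

/-- For a periodic switched matrix-weighted network with adjacency
data `A^k = A^{k mod m}` (edge weights symmetric PSD, `A^k_ij = A^k_ji`,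
`A^k_ii = 0`), Laplacians `L^k`, and dwell times `Δt k = Δt (k mod m) > 0`: if
the integral graph over one period has a positive spanning tree — i.e. the simple
graph whose edges are the pairs `(i,j)` with `∑_{k=0}^{m-1} Δt_k A^k_ij` positive
definite is connected — then every initial state converges to its average
consensus value. -/
theorem periodic_positive_spanning_tree_average_consensus
    {n d m : ℕ} (hn : 2 ≤ n) (hd : 1 ≤ d) (hm : 1 ≤ m)
    (A : ℕ → Fin n → Fin n → Matrix (Fin d) (Fin d) ℝ) (Δt : ℕ → ℝ)
    (hAper : ∀ k, A k = A (k % m)) (hΔper : ∀ k, Δt k = Δt (k % m))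
    (hΔ : ∀ k, 0 < Δt k)
    (hpsd : ∀ k i j, (A k i j).PosSemidef)
    (hsym : ∀ k i j, A k i j = A k j i)
    (hdiag : ∀ k i, A k i i = 0)
    (htree : (SimpleGraph.fromRel (fun i j : Fin n =>
        (∑ k ∈ Finset.range m, Δt k • A k i j).PosDef)).Connected) :
    ∀ x0 : Fin n × Fin d → ℝ,
      Tendsto
        (stateSeq (fun k => NormedSpace.exp (-(Δt k • mwLaplacian (A k)))) x0)
        atTop (nhds (fun p => (n : ℝ)⁻¹ * ∑ i : Fin n, x0 (i, p.2))) :=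
  periodic_positive_spanning_tree_average_consensus_general A Δt hAper hΔper hΔ hpsd hsym htree
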